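/- Let X, Y be finite sets and E the optimal transport cost with finite cost c. For any probability mass functions P_X, P_Y, any n ≥ 1, and any α ∈ ℝ, Strassen's optimal excess-cost probability for product measures satisfies the nested formula: inf over couplings P_{X^nY^n} of (P_X^n, P_Y^n) of P{c_n(X^n, Y^n) > α} = inf over couplings π of (μ, ν) of π{(T_X, T_Y) : E(T_X, T_Y) > α}, where μ (resp. ν) is the distribution of the empirical measure of an i.i.d. sample of size n from P_X (resp. P_Y), and c_n(x^n,y^n) = (1/n)Σ_i c(x_i,y_i). -/

import Mathlib

open Finset
open scoped Classical

/-- `p` is a probability mass function on a finite set. -/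
def IsPMF {X : Type*} [Fintype X] (p : X → ℝ) : Prop :=
  (∀ x, 0 ≤ p x) ∧ ∑ x, p x = 1

/-- `π` is a coupling of the probability mass functions `pX` and `pY`. -/
def IsCoupling {X Y : Type*} [Fintype X] [Fintype Y]
    (pX : X → ℝ) (pY : Y → ℝ) (π : X × Y → ℝ) : Prop :=
  IsPMF π ∧ (∀ x, ∑ y, π (x, y) = pX x) ∧ (∀ y, ∑ x, π (x, y) = pY y)

/-- The optimal transport cost between two probability mass functions. -/
noncomputable def OTCost {X Y : Type*} [Fintype X] [Fintype Y]
    (c : X × Y → ℝ) (pX : X → ℝ) (pY : Y → ℝ) : ℝ :=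
  sInf {r | ∃ π, IsCoupling pX pY π ∧ r = ∑ z, π z * c z}

/-!
Pushing a coupling of `P_Xⁿ, P_Yⁿ` forward along `(xⁿ, yⁿ) ↦ (T_{xⁿ}, T_{yⁿ})` gives a coupling
of `μ, ν`, and the event `E > α` can only shrink: the joint type of `(xⁿ, yⁿ)` couples the two
marginal types at cost `c_n(xⁿ, yⁿ)`, so `E(T_{xⁿ}, T_{yⁿ}) ≤ c_n(xⁿ, yⁿ)`.

Conversely, by Birkhoff's theorem the OT cost between two types of denominator `n` is attained by
a pair of sequences `(aⁿ, bⁿ)` of these types aligned by a permutation: `c_n(aⁿ, bⁿ) = E`.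
Given a coupling of `μ, ν`, draw a pair of types, take such an aligned pair, and apply one
uniformly random permutation to both sequences. This keeps `c_n`, and each marginal becomes a
uniformly random sequence of a type drawn from the type law, which is `P_Xⁿ` (resp. `P_Yⁿ`)
because product measures are constant on type classes.
-/

open Equiv

variable {n : ℕ}

theorem Finsupp.le_sum_ite {β : Type*} {q : β →₀ ℝ} (hq : ∀ t, 0 ≤ q t) (P : β → Prop)
    [DecidablePred P] {t : β} (ht : P t) : q t ≤ q.sum fun t v => if P t then v else 0 := by
  rw [Finsupp.sum]
  by_cases hts : t ∈ q.support
  · simpa [ht] using Finset.single_le_sum (f := fun t => if P t then q t else 0)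
      (fun t _ => by split_ifs <;> simp [hq]) hts
  · rw [Finsupp.notMem_support_iff.1 hts]
    exact Finset.sum_nonneg fun t _ => by split_ifs <;> simp [hq]

theorem Finsupp.sum_ite_mapDomain_equivFunOnFinite {α β : Type*} [Fintype α] (h : α → β)
    (π : α → ℝ) (P : β → Prop) [DecidablePred P] :
    (mapDomain h (equivFunOnFinite.symm π)).sum (fun b v => if P b then v else 0)
      = ∑ a, if P (h a) then π a else 0 := by
  rw [sum_mapDomain_index (fun _ => by simp) (fun _ _ _ => by split_ifs <;> simp),
    sum_fintype _ _ (fun _ => by simp)]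
  simp

theorem exists_perm_sum_le_of_mem_doublyStochastic {ι : Type*} [Fintype ι] [DecidableEq ι]
    {D : Matrix ι ι ℝ} (hD : D ∈ doublyStochastic ℝ ι) (C : Matrix ι ι ℝ) :
    ∃ σ : Perm ι, ∑ i, C i (σ i) ≤ ∑ i, ∑ j, D i j * C i j := by
  let f : Matrix ι ι ℝ →ₗ[ℝ] ℝ := Matrix.traceLinearMap ι ℝ ℝ ∘ₗ LinearMap.mulRight ℝ C.transpose
  have hf : ∀ M, f M = ∑ i, ∑ j, M i j * C i j := fun M => by
    simp [f, Matrix.trace, Matrix.mul_apply]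
  rw [← SetLike.mem_coe, doublyStochastic_eq_convexHull_permMatrix] at hD
  obtain ⟨_, ⟨σ, rfl⟩, hσ⟩ :=
    (f.concaveOn convex_univ).exists_le_of_mem_convexHull (Set.subset_univ _) hD
  refine ⟨σ, ?_⟩
  rw [hf, hf] at hσ
  simpa [Perm.permMatrix, PEquiv.toMatrix_apply, Equiv.toPEquiv_apply] using hσ

section Transport

variable {X Y : Type*} [Fintype X] [Fintype Y] {pX : X → ℝ} {pY : Y → ℝ} {π : X × Y → ℝ}

theorem IsPMF.nonempty {p : X → ℝ} (hp : IsPMF p) : Nonempty X := by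
  by_contra h
  simpa [not_nonempty_iff.1 h] using hp.2

theorem IsPMF.isCoupling_mul (hX : IsPMF pX) (hY : IsPMF pY) :
    IsCoupling pX pY fun z => pX z.1 * pY z.2 := by
  refine ⟨⟨fun z => mul_nonneg (hX.1 _) (hY.1 _), ?_⟩, fun x => ?_, fun y => ?_⟩
  · simp [Fintype.sum_prod_type, ← mul_sum, hX.2, hY.2]
  · simp [← mul_sum, hY.2]
  · simp [← sum_mul, hX.2]

theorem IsCoupling.swap (hπ : IsCoupling pX pY π) : IsCoupling pY pX (π ∘ Prod.swap) :=
  ⟨⟨fun z => hπ.1.1 _, by rw [← hπ.1.2, ← (Equiv.prodComm X Y).sum_comp]; rfl⟩, hπ.2.2, hπ.2.1⟩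

theorem IsCoupling.apply_eq_zero_of_left (hπ : IsCoupling pX pY π) {x : X} (hx : pX x = 0)
    (y : Y) : π (x, y) = 0 :=
  (sum_eq_zero_iff_of_nonneg fun y _ => hπ.1.1 (x, y)).1 ((hπ.2.1 x).trans hx) y (mem_univ y)

theorem IsCoupling.mul_div_mul (hπ : IsCoupling pX pY π) (x : X) (y : Y) :
    pX x * pY y * (π (x, y) / (pX x * pY y)) = π (x, y) := by
  refine mul_div_cancel_of_imp' fun h => ?_
  rcases mul_eq_zero.1 h with hx | hy
  · exact hπ.apply_eq_zero_of_left hx y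
  · exact hπ.swap.apply_eq_zero_of_left hy x

variable {c : X × Y → ℝ}

theorem OTCost_le (hc : ∀ z, 0 ≤ c z) (hπ : IsCoupling pX pY π) :
    OTCost c pX pY ≤ ∑ z, π z * c z :=
  csInf_le ⟨0, by
    rintro _ ⟨π', hπ', rfl⟩
    exact sum_nonneg fun z _ => mul_nonneg (hπ'.1.1 z) (hc z)⟩ ⟨π, hπ, rfl⟩

theorem le_OTCost (hX : IsPMF pX) (hY : IsPMF pY) {r : ℝ}
    (h : ∀ π, IsCoupling pX pY π → r ≤ ∑ z, π z * c z) : r ≤ OTCost c pX pY :=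
  le_csInf ⟨_, _, hX.isCoupling_mul hY, rfl⟩ fun _ ⟨π, hπ, hr⟩ => hr ▸ h π hπ

end Transport

section Types

variable {Z : Type*}

def iidPMF (p : Z → ℝ) (n : ℕ) (w : Fin n → Z) : ℝ := ∏ i, p (w i)

theorem iidPMF_comp_perm (p : Z → ℝ) (w : Fin n → Z) (τ : Perm (Fin n)) :
    iidPMF p n (w ∘ τ) = iidPMF p n w :=
  Equiv.prod_comp τ fun i => p (w i)

variable [DecidableEq Z]

noncomputable def empirical (w : Fin n → Z) : Z → ℝ :=
  fun z => (#{i | w i = z} : ℝ) / n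

noncomputable def typeLaw [Fintype Z] (p : Z → ℝ) (n : ℕ) (T : Z → ℝ) : ℝ :=
  ∑ w : Fin n → Z, if empirical w = T then iidPMF p n w else 0

def permCount (z w : Fin n → Z) : ℕ := #{τ : Perm (Fin n) | z ∘ τ = w}

theorem sum_comp_eq_mul_sum_empirical [Fintype Z] (w : Fin n → Z) (f : Z → ℝ) :
    ∑ i, f (w i) = n * ∑ z, empirical w z * f z := by
  rcases n.eq_zero_or_pos with rfl | hn
  · simp
  have hfiber : ∀ z, ∑ i with w i = z, f (w i) = #{i | w i = z} * f z := fun z => by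
    rw [sum_congr rfl fun i hi => by rw [(mem_filter.1 hi).2], sum_const, nsmul_eq_mul]
  rw [← sum_fiberwise univ w, mul_sum]
  refine sum_congr rfl fun z _ => ?_
  rw [hfiber, empirical]
  field_simp

theorem empirical_isPMF [Fintype Z] (hn : 0 < n) (w : Fin n → Z) : IsPMF (empirical w) := by
  refine ⟨fun z => by unfold empirical; positivity, ?_⟩
  have h := sum_comp_eq_mul_sum_empirical w (fun _ => 1)
  simp only [mul_one, sum_const, card_univ, Fintype.card_fin, nsmul_eq_mul] at h
  exact (mul_eq_left₀ (by positivity)).1 h.symm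

theorem empirical_comp_perm (w : Fin n → Z) (τ : Perm (Fin n)) :
    empirical (w ∘ τ) = empirical w := by
  ext z
  simp only [empirical, Function.comp_apply]
  congr 2
  exact card_equiv τ (by simp)

theorem exists_perm_of_empirical_eq (hn : 0 < n) {v w : Fin n → Z}
    (h : empirical v = empirical w) : ∃ ρ : Perm (Fin n), v = w ∘ ρ := by
  have hn' : (n : ℝ) ≠ 0 := Nat.cast_ne_zero.2 hn.ne'
  have hcard : ∀ z, Fintype.card {i // v i = z} = Fintype.card {i // w i = z} := fun z => by
    have := congrFun h z
    simp only [empirical, div_left_inj' hn', Nat.cast_inj] at this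
    simpa only [Fintype.card_subtype] using this
  let e z : {i // v i = z} ≃ {i // w i = z} := Fintype.equivOfCardEq (hcard z)
  refine ⟨(sigmaFiberEquiv v).symm.trans ((sigmaCongrRight e).trans (sigmaFiberEquiv w)),
    funext fun i => ?_⟩
  exact (e (v i) ⟨i, rfl⟩).2.symm

theorem permCount_comp_perm (z w : Fin n → Z) (ρ : Perm (Fin n)) :
    permCount z (w ∘ ρ) = permCount z w := by
  refine card_equiv (Equiv.mulRight ρ⁻¹) fun τ => ?_
  simp only [mem_filter, mem_univ, true_and, coe_mulRight, Perm.coe_mul]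
  constructor
  · intro h; ext i; simpa using congrFun h (ρ⁻¹ i)
  · rintro rfl; ext i; simp

theorem permCount_eq_zero_of_empirical_ne {z w : Fin n → Z} (h : empirical z ≠ empirical w) :
    permCount z w = 0 := by
  refine card_eq_zero.2 (filter_eq_empty_iff.2 fun τ _ hτ => h ?_)
  rw [← hτ, empirical_comp_perm]

theorem sum_iidPMF_mul_permCount [Fintype Z] (p : Z → ℝ) (z : Fin n → Z) :
    ∑ w, iidPMF p n w * permCount z w = n.factorial * iidPMF p n z := by
  simp only [permCount, natCast_card_filter, mul_sum, mul_ite, mul_one, mul_zero]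
  rw [sum_comm]
  simp [iidPMF_comp_perm, Fintype.card_perm]

theorem typeLaw_mul_permCount [Fintype Z] (hn : 0 < n) (p : Z → ℝ) {z w : Fin n → Z}
    (h : empirical z = empirical w) :
    typeLaw p n (empirical w) * permCount z w = n.factorial * iidPMF p n w := by
  obtain ⟨ρ, rfl⟩ := exists_perm_of_empirical_eq hn h.symm
  have hclass : ∀ v, (if empirical v = empirical z then iidPMF p n v else 0) * permCount z (z ∘ ρ)
      = iidPMF p n v * permCount z v := fun v => by
    split_ifs with hv
    · obtain ⟨ρ', rfl⟩ := exists_perm_of_empirical_eq hn hv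
      rw [permCount_comp_perm, permCount_comp_perm]
    · rw [permCount_eq_zero_of_empirical_ne (Ne.symm hv)]; simp
  rw [empirical_comp_perm, typeLaw, sum_mul, sum_congr rfl fun v _ => hclass v,
    sum_iidPMF_mul_permCount, iidPMF_comp_perm]

theorem iidPMF_le_typeLaw [Fintype Z] {p : Z → ℝ} (hp : ∀ z, 0 ≤ p z) (w : Fin n → Z) :
    iidPMF p n w ≤ typeLaw p n (empirical w) := by
  have hnonneg : ∀ v, 0 ≤ iidPMF p n v := fun v => prod_nonneg fun i _ => hp _
  unfold typeLaw
  simpa using single_le_sum (f := fun v => if empirical v = empirical w then iidPMF p n v else 0)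
    (fun v _ => by split_ifs <;> simp [hnonneg]) (mem_univ w)

theorem empirical_apply_self_pos (hn : 0 < n) (w : Fin n → Z) (i : Fin n) :
    0 < empirical w (w i) :=
  div_pos (Nat.cast_pos.2 (card_pos.2 ⟨i, by simp⟩)) (Nat.cast_pos.2 hn)

theorem exists_empirical_eq_of_typeLaw_ne_zero [Fintype Z] {p : Z → ℝ} {T : Z → ℝ}
    (h : typeLaw p n T ≠ 0) : ∃ w : Fin n → Z, empirical w = T := by
  contrapose! h
  exact sum_eq_zero fun w _ => if_neg (h w)

-- Rearranging sequences uniformly at random, with types drawn from the type law, gives back the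
-- product law.
theorem sum_mul_permCount_eq_iidPMF [Fintype Z] (hn : 0 < n) {p : Z → ℝ} (hp : ∀ z, 0 ≤ p z)
    {β : Type*} {q : β →₀ ℝ} (hq : ∀ t, 0 ≤ q t) (f : β → Z → ℝ)
    (hqf : ∀ T, (q.sum fun t v => if f t = T then v else 0) = typeLaw p n T)
    (a : β → Fin n → Z) (ha : ∀ t ∈ q.support, empirical (a t) = f t) (w : Fin n → Z) :
    ∑ t ∈ q.support, q t / n.factorial * permCount (a t) w = iidPMF p n w := by
  have hterm : ∀ t ∈ q.support, q t / n.factorial * permCount (a t) w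
      = (if f t = empirical w then q t else 0) * (iidPMF p n w / typeLaw p n (empirical w)) := by
    intro t ht
    split_ifs with hft
    · have hpos : 0 < typeLaw p n (empirical w) := by
        rw [← hqf, ← hft]
        exact (lt_of_le_of_ne (hq t) (Finsupp.mem_support_iff.1 ht).symm).trans_le
          (Finsupp.le_sum_ite hq _ rfl)
      have h := typeLaw_mul_permCount hn p ((ha t ht).trans hft)
      field_simp
      linear_combination q t * h
    · rw [permCount_eq_zero_of_empirical_ne (by rwa [ha t ht])]
      simp
  have hmass := hqf (empirical w)
  rw [Finsupp.sum] at hmass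
  rw [sum_congr rfl hterm, ← sum_mul, hmass, mul_div_cancel_of_imp']
  intro h
  exact le_antisymm (h ▸ iidPMF_le_typeLaw hp w) (prod_nonneg fun i _ => hp _)

theorem sum_perm_div_factorial (x : ℝ) : ∑ _τ : Perm (Fin n), x / n.factorial = x := by
  rw [sum_const, card_univ, Fintype.card_perm, Fintype.card_fin, nsmul_eq_mul]
  field_simp

end Types

section EmpiricalTransport

variable {X Y : Type*}

noncomputable def avgCost (c : X × Y → ℝ) (xs : Fin n → X) (ys : Fin n → Y) : ℝ :=
  (1 / n : ℝ) * ∑ i, c (xs i, ys i)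

theorem avgCost_comp_perm (c : X × Y → ℝ) (xs : Fin n → X) (ys : Fin n → Y)
    (τ : Perm (Fin n)) : avgCost c (xs ∘ τ) (ys ∘ τ) = avgCost c xs ys := by
  simp only [avgCost, Function.comp_apply, Equiv.sum_comp τ fun i => c (xs i, ys i)]

variable [Fintype X] [Fintype Y] [DecidableEq X] [DecidableEq Y]

theorem isCoupling_empirical_zip (hn : 0 < n) (xs : Fin n → X) (ys : Fin n → Y) :
    IsCoupling (empirical xs) (empirical ys) (empirical fun i => (xs i, ys i)) := by
  refine ⟨empirical_isPMF hn _, fun x => ?_, fun y => ?_⟩ <;>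
  · simp only [empirical, ← sum_div, natCast_card_filter, Prod.mk.injEq, ite_and]
    rw [sum_comm]
    simp

theorem sum_empirical_zip_mul (c : X × Y → ℝ) (xs : Fin n → X) (ys : Fin n → Y) :
    ∑ z, empirical (fun i => (xs i, ys i)) z * c z = avgCost c xs ys := by
  rcases n.eq_zero_or_pos with rfl | hn
  · simp [empirical, avgCost]
  rw [avgCost, sum_comp_eq_mul_sum_empirical (fun i => (xs i, ys i)) c]
  field_simp

theorem OTCost_empirical_le_avgCost (hn : 0 < n) {c : X × Y → ℝ} (hc : ∀ z, 0 ≤ c z)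
    (xs : Fin n → X) (ys : Fin n → Y) : OTCost c (empirical xs) (empirical ys) ≤ avgCost c xs ys :=
  sum_empirical_zip_mul c xs ys ▸ OTCost_le hc (isCoupling_empirical_zip hn xs ys)

-- Spreads `W (x, y)` uniformly over the index pairs `(i, j)` with `xs i = x` and `ys j = y`.
noncomputable def couplingMatrix (xs : Fin n → X) (ys : Fin n → Y) (W : X × Y → ℝ) :
    Matrix (Fin n) (Fin n) ℝ :=
  fun i j => W (xs i, ys j) / (empirical xs (xs i) * empirical ys (ys j)) / n

variable {xs : Fin n → X} {ys : Fin n → Y} {W : X × Y → ℝ}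

theorem sum_couplingMatrix_mul (hn : 0 < n) (hW : IsCoupling (empirical xs) (empirical ys) W)
    (g : X → Y → ℝ) (i : Fin n) :
    ∑ j, couplingMatrix xs ys W i j * g (xs i) (ys j)
      = (∑ y, W (xs i, y) * g (xs i) y) / empirical xs (xs i) := by
  have hx := (empirical_apply_self_pos hn xs i).ne'
  let f y := W (xs i, y) / (empirical xs (xs i) * empirical ys y) / n * g (xs i) y
  rw [show ∑ j, couplingMatrix xs ys W i j * g (xs i) (ys j) = n * ∑ y, empirical ys y * f y from
    sum_comp_eq_mul_sum_empirical ys f, mul_sum, sum_div]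
  refine sum_congr rfl fun y _ => ?_
  have h := hW.mul_div_mul (xs i) y
  simp only [f]
  generalize W (xs i, y) / (empirical xs (xs i) * empirical ys y) = K at h ⊢
  rw [← h]
  field_simp

theorem sum_couplingMatrix (hn : 0 < n) (hW : IsCoupling (empirical xs) (empirical ys) W)
    (i : Fin n) :
    ∑ j, couplingMatrix xs ys W i j = 1 := by
  simpa [hW.2.1, (empirical_apply_self_pos hn _ i).ne'] using sum_couplingMatrix_mul hn hW 1 i

theorem couplingMatrix_mem_doublyStochastic (hn : 0 < n)
    (hW : IsCoupling (empirical xs) (empirical ys) W) :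
    couplingMatrix xs ys W ∈ doublyStochastic ℝ (Fin n) := by
  refine mem_doublyStochastic_iff_sum.2 ⟨fun i j => ?_, sum_couplingMatrix hn hW, fun j => ?_⟩
  · have := hW.1.1 (xs i, ys j)
    have := (empirical_isPMF hn xs).1 (xs i)
    have := (empirical_isPMF hn ys).1 (ys j)
    unfold couplingMatrix
    positivity
  · rw [← sum_couplingMatrix hn hW.swap j]
    exact sum_congr rfl fun i _ => by simp [couplingMatrix, mul_comm]

theorem exists_perm_avgCost_le (hn : 0 < n) (hW : IsCoupling (empirical xs) (empirical ys) W)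
    (c : X × Y → ℝ) : ∃ σ : Perm (Fin n), avgCost c xs (ys ∘ σ) ≤ ∑ z, W z * c z := by
  obtain ⟨σ, hσ⟩ := exists_perm_sum_le_of_mem_doublyStochastic
    (couplingMatrix_mem_doublyStochastic hn hW) fun i j => c (xs i, ys j)
  refine ⟨σ, ?_⟩
  have hcost : ∑ i, ∑ j, couplingMatrix xs ys W i j * c (xs i, ys j) = n * ∑ z, W z * c z := by
    simp only [sum_couplingMatrix_mul hn hW (fun x y => c (x, y))]
    rw [sum_comp_eq_mul_sum_empirical xs (fun x => (∑ y, W (x, y) * c (x, y)) / empirical xs x),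
      Fintype.sum_prod_type]
    congr 1
    refine sum_congr rfl fun x _ => mul_div_cancel_of_imp' fun hx => ?_
    simp [hW.apply_eq_zero_of_left hx]
  rw [hcost] at hσ
  rw [avgCost, one_div_mul_eq_div, div_le_iff₀' (Nat.cast_pos.2 hn)]
  exact hσ

theorem exists_perm_avgCost_le_OTCost (hn : 0 < n) {c : X × Y → ℝ} (xs : Fin n → X)
    (ys : Fin n → Y) :
    ∃ σ : Perm (Fin n), avgCost c xs (ys ∘ σ) ≤ OTCost c (empirical xs) (empirical ys) := by
  obtain ⟨σ, -, hσ⟩ := exists_min_image univ (fun σ : Perm (Fin n) => avgCost c xs (ys ∘ σ))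
    univ_nonempty
  refine ⟨σ, le_OTCost (empirical_isPMF hn xs) (empirical_isPMF hn ys) fun W hW => ?_⟩
  obtain ⟨σ', hσ'⟩ := exists_perm_avgCost_le hn hW c
  exact (hσ σ' (mem_univ _)).trans hσ'

end EmpiricalTransport

def IsFinsuppCoupling {α β : Type*} [DecidableEq α] [DecidableEq β] (μ : α → ℝ) (ν : β → ℝ)
    (q : (α × β) →₀ ℝ) : Prop :=
  (∀ t, 0 ≤ q t) ∧ (q.sum fun _ v => v) = 1 ∧
    (∀ T, (q.sum fun t v => if t.1 = T then v else 0) = μ T) ∧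
    (∀ T, (q.sum fun t v => if t.2 = T then v else 0) = ν T)

section Excess

variable {X Y : Type*} [DecidableEq X] [DecidableEq Y]

noncomputable def permMixture {β : Type*} (q : β →₀ ℝ) (ab : β → (Fin n → X) × (Fin n → Y))
    (p : (Fin n → X) × (Fin n → Y)) : ℝ :=
  ∑ t ∈ q.support, ∑ τ : Perm (Fin n),
    if ((ab t).1 ∘ τ, (ab t).2 ∘ τ) = p then q t / n.factorial else 0

section PermMixture

variable {β : Type*} (q : β →₀ ℝ) (ab : β → (Fin n → X) × (Fin n → Y))

theorem sum_ite_permMixture [Fintype X] [Fintype Y] (P : (Fin n → X) × (Fin n → Y) → Prop)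
    [DecidablePred P] :
    ∑ p, (if P p then permMixture q ab p else 0) = ∑ t ∈ q.support, ∑ τ : Perm (Fin n),
      if P ((ab t).1 ∘ τ, (ab t).2 ∘ τ) then q t / n.factorial else 0 := by
  rw [← sum_filter]
  unfold permMixture
  rw [sum_comm]
  refine sum_congr rfl fun t _ => ?_
  rw [sum_comm]
  simp

theorem sum_permMixture_fst [Fintype Y] (xs : Fin n → X) :
    ∑ ys, permMixture q ab (xs, ys)
      = ∑ t ∈ q.support, q t / n.factorial * permCount (ab t).1 xs := by
  simp only [permMixture, Prod.mk.injEq, ite_and, permCount, natCast_card_filter, mul_sum]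
  rw [sum_comm]
  refine sum_congr rfl fun t _ => ?_
  rw [sum_comm]
  simp

theorem sum_permMixture_snd [Fintype X] (ys : Fin n → Y) :
    ∑ xs, permMixture q ab (xs, ys)
      = ∑ t ∈ q.support, q t / n.factorial * permCount (ab t).2 ys := by
  simp only [permMixture, Prod.mk.injEq, ite_and, permCount, natCast_card_filter, mul_sum]
  rw [sum_comm]
  refine sum_congr rfl fun t _ => ?_
  rw [sum_comm]
  simp

end PermMixture

variable [Fintype X] [Fintype Y] {c : X × Y → ℝ} {pX : X → ℝ} {pY : Y → ℝ}

theorem exists_isFinsuppCoupling_typeLaw_excess_le (hn : 0 < n) (hc : ∀ z, 0 ≤ c z)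
    {π : (Fin n → X) × (Fin n → Y) → ℝ} (hπ : IsCoupling (iidPMF pX n) (iidPMF pY n) π)
    (α : ℝ) : ∃ q, IsFinsuppCoupling (typeLaw pX n) (typeLaw pY n) q ∧
      (q.sum fun t v => if α < OTCost c t.1 t.2 then v else 0)
        ≤ ∑ p, if α < avgCost c p.1 p.2 then π p else 0 := by
  let q := Finsupp.mapDomain (fun p => (empirical p.1, empirical p.2))
    (Finsupp.equivFunOnFinite.symm π)
  refine ⟨q, ⟨fun t => ?_, ?_, fun T => ?_, fun T => ?_⟩, ?_⟩
  · simp only [q, Finsupp.mapDomain, Finsupp.sum_apply, Finsupp.single_apply]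
    exact sum_nonneg fun p _ => by dsimp only; split_ifs <;> simp [hπ.1.1 p]
  · rw [Finsupp.sum_mapDomain_index (fun _ => rfl) (fun _ _ _ => rfl),
      Finsupp.sum_fintype _ _ (fun _ => rfl)]
    simpa using hπ.1.2
  · rw [Finsupp.sum_ite_mapDomain_equivFunOnFinite, Fintype.sum_prod_type]
    exact sum_congr rfl fun xs _ => by rw [← hπ.2.1 xs]; split_ifs <;> simp
  · rw [Finsupp.sum_ite_mapDomain_equivFunOnFinite, Fintype.sum_prod_type, sum_comm]
    exact sum_congr rfl fun ys _ => by rw [← hπ.2.2 ys]; split_ifs <;> simp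
  · rw [Finsupp.sum_ite_mapDomain_equivFunOnFinite]
    refine sum_le_sum fun p _ => ?_
    split_ifs with h h'
    exacts [le_rfl, absurd (h.trans_le (OTCost_empirical_le_avgCost hn hc p.1 p.2)) h',
      hπ.1.1 p, le_rfl]

variable {q : ((X → ℝ) × (Y → ℝ)) →₀ ℝ} {ab : (X → ℝ) × (Y → ℝ) → (Fin n → X) × (Fin n → Y)}

theorem isCoupling_permMixture (hn : 0 < n) (hpX : ∀ x, 0 ≤ pX x) (hpY : ∀ y, 0 ≤ pY y)
    (hq : IsFinsuppCoupling (typeLaw pX n) (typeLaw pY n) q)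
    (hab : ∀ t ∈ q.support, empirical (ab t).1 = t.1 ∧ empirical (ab t).2 = t.2) :
    IsCoupling (iidPMF pX n) (iidPMF pY n) (permMixture q ab) := by
  obtain ⟨hq0, hq1, hqX, hqY⟩ := hq
  refine ⟨⟨fun p => ?_, ?_⟩, fun xs => ?_, fun ys => ?_⟩
  · exact sum_nonneg fun t _ => sum_nonneg fun τ _ => by
      split_ifs <;> first | exact le_rfl | exact div_nonneg (hq0 t) (by positivity)
  · have hmass := sum_ite_permMixture q ab fun _ => True
    simp only [if_true, sum_perm_div_factorial] at hmass
    exact hmass.trans hq1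
  · rw [sum_permMixture_fst]
    exact sum_mul_permCount_eq_iidPMF hn hpX hq0 Prod.fst hqX _ (fun t ht => (hab t ht).1) xs
  · rw [sum_permMixture_snd]
    exact sum_mul_permCount_eq_iidPMF hn hpY hq0 Prod.snd hqY _ (fun t ht => (hab t ht).2) ys

theorem sum_ite_avgCost_permMixture_le (hq : ∀ t, 0 ≤ q t)
    (hab : ∀ t ∈ q.support, avgCost c (ab t).1 (ab t).2 ≤ OTCost c t.1 t.2) (α : ℝ) :
    ∑ p, (if α < avgCost c p.1 p.2 then permMixture q ab p else 0)
      ≤ q.sum fun t v => if α < OTCost c t.1 t.2 then v else 0 := by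
  rw [sum_ite_permMixture, Finsupp.sum]
  refine sum_le_sum fun t ht => ?_
  simp only [avgCost_comp_perm]
  rw [sum_ite_irrel, sum_const_zero, sum_perm_div_factorial]
  split_ifs with h h'
  exacts [le_rfl, absurd (h.trans_le (hab t ht)) h', hq t, le_rfl]

theorem exists_isCoupling_iidPMF_excess_le (hn : 0 < n) (hpX : IsPMF pX) (hpY : IsPMF pY)
    (hq : IsFinsuppCoupling (typeLaw pX n) (typeLaw pY n) q) (α : ℝ) :
    ∃ π, IsCoupling (iidPMF pX n) (iidPMF pY n) π ∧
      ∑ p, (if α < avgCost c p.1 p.2 then π p else 0)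
        ≤ q.sum fun t v => if α < OTCost c t.1 t.2 then v else 0 := by
  have hpos : ∀ t ∈ q.support, 0 < q t := fun t ht =>
    (hq.1 t).lt_of_ne (Finsupp.mem_support_iff.1 ht).symm
  have haligned : ∀ t ∈ q.support, ∃ ab : (Fin n → X) × (Fin n → Y),
      (empirical ab.1 = t.1 ∧ empirical ab.2 = t.2) ∧ avgCost c ab.1 ab.2 ≤ OTCost c t.1 t.2 := by
    intro t ht
    obtain ⟨xs, hxs⟩ := exists_empirical_eq_of_typeLaw_ne_zero (p := pX) (T := t.1) <| by
      rw [← hq.2.2.1]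
      exact ((hpos t ht).trans_le (Finsupp.le_sum_ite hq.1 (·.1 = t.1) rfl)).ne'
    obtain ⟨ys, hys⟩ := exists_empirical_eq_of_typeLaw_ne_zero (p := pY) (T := t.2) <| by
      rw [← hq.2.2.2]
      exact ((hpos t ht).trans_le (Finsupp.le_sum_ite hq.1 (·.2 = t.2) rfl)).ne'
    obtain ⟨σ, hσ⟩ := exists_perm_avgCost_le_OTCost hn (c := c) xs ys
    exact ⟨(xs, ys ∘ σ), ⟨hxs, (empirical_comp_perm ys σ).trans hys⟩, hxs ▸ hys ▸ hσ⟩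
  have := hpX.nonempty
  have := hpY.nonempty
  choose! ab hab hcost using haligned
  exact ⟨permMixture q ab, isCoupling_permMixture hn hpX.1 hpY.1 hq hab,
    sum_ite_avgCost_permMixture_le hq.1 hcost α⟩

end Excess

/-- nested formula for Strassen's OT problem: the minimal excess-cost
probability `inf_{couplings of (P_X^n, P_Y^n)} P{c_n(X^n,Y^n) > α}` equals the minimal
probability, over (finitely supported) couplings `q` of the laws `μ, ν` of the empirical
measures of i.i.d. samples from `P_X, P_Y`, of the event `E(T_X,T_Y) > α`. -/
theorem stmt13 {X Y : Type*} [Fintype X] [Fintype Y] [DecidableEq X] [DecidableEq Y]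
    (c : X × Y → ℝ) (hc : ∀ z, 0 ≤ c z)
    (pX : X → ℝ) (pY : Y → ℝ) (hpX : IsPMF pX) (hpY : IsPMF pY)
    (n : ℕ) (hn : 0 < n) (α : ℝ)
    (empX : (Fin n → X) → X → ℝ)
    (hempX : ∀ xs x, empX xs x = ((Finset.univ.filter fun i => xs i = x).card : ℝ) / n)
    (empY : (Fin n → Y) → Y → ℝ)
    (hempY : ∀ ys y, empY ys y = ((Finset.univ.filter fun i => ys i = y).card : ℝ) / n)
    (μ : (X → ℝ) → ℝ)
    (hμ : ∀ T, μ T = ∑ xs : Fin n → X, if empX xs = T then ∏ i, pX (xs i) else 0)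
    (ν : (Y → ℝ) → ℝ)
    (hν : ∀ T, ν T = ∑ ys : Fin n → Y, if empY ys = T then ∏ i, pY (ys i) else 0) :
    sInf {r | ∃ π : (Fin n → X) × (Fin n → Y) → ℝ,
        IsCoupling (fun xs => ∏ i, pX (xs i)) (fun ys => ∏ i, pY (ys i)) π ∧
        r = ∑ p, if α < (1 / n : ℝ) * ∑ i, c (p.1 i, p.2 i) then π p else 0}
    = sInf {r | ∃ q : ((X → ℝ) × (Y → ℝ)) →₀ ℝ,
        (∀ p, 0 ≤ q p) ∧
        (q.sum fun _ v => v) = 1 ∧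
        (∀ T, (q.sum fun p v => if p.1 = T then v else 0) = μ T) ∧
        (∀ T, (q.sum fun p v => if p.2 = T then v else 0) = ν T) ∧
        r = q.sum fun p v => if α < OTCost c p.1 p.2 then v else 0} := by
  obtain rfl : empX = empirical := funext fun xs => funext (hempX xs)
  obtain rfl : empY = empirical := funext fun ys => funext (hempY ys)
  obtain rfl : μ = typeLaw pX n := funext hμ
  obtain rfl : ν = typeLaw pY n := funext hν
  refine csInf_eq_csInf_of_forall_exists_le ?_ ?_
  · rintro _ ⟨π, hπ, rfl⟩
    obtain ⟨q, ⟨hq0, hq1, hqX, hqY⟩, hle⟩ := exists_isFinsuppCoupling_typeLaw_excess_le hn hc hπ α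
    exact ⟨_, ⟨q, hq0, hq1, hqX, hqY, rfl⟩, hle⟩
  · rintro _ ⟨q, hq0, hq1, hqX, hqY, rfl⟩
    obtain ⟨π, hπ, hle⟩ := exists_isCoupling_iidPMF_excess_le hn hpX hpY ⟨hq0, hq1, hqX, hqY⟩ α
    exact ⟨_, ⟨π, hπ, rfl⟩, hle⟩
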